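/- arXiv:math/0105100 — 4 statements merged into one kernel-verified Lean document; each statement's English description precedes it below -/
import Mathlib

section
/- For every natural number n and every real number x, ∑_{l=1}^{n} C(n,l)·x^l/l = ∑_{l=1}^{n} ((1+x)^l − 1)/l. -/
/-! Let `F n` be the left-hand side. Pascal's rule `C(n+1,l) = C(n,l) + C(n,l-1)` and the absorption
identity `C(n,l-1)/l = C(n+1,l)/(n+1)` give `F (n+1) = F n + ((1+x)^(n+1) - 1)/(n+1)`, by the binomial
theorem; the right-hand side satisfies the same recursion, and both vanish at `n = 0`. -/

open Finset

theorem sum_Icc_one_choose_mul_pow {R : Type*} [CommRing R] (n : ℕ) (x : R) :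
    ∑ l ∈ Icc 1 n, (n.choose l : R) * x ^ l = (1 + x) ^ n - 1 := by
  have binomial := (Commute.one_right x).add_pow n
  simp only [one_pow, mul_one] at binomial
  rw [add_comm 1 x, binomial, sum_range_eq_add_Ico _ n.add_one_pos, Ico_add_one_right_eq_Icc]
  simp [mul_comm]

section CharZeroField

variable {K : Type*} [Field K] [CharZero K]

theorem cast_choose_pred_div (n : ℕ) {l : ℕ} (hl : 0 < l) :
    (n.choose (l - 1) : K) / l = ((n + 1).choose l : K) / (n + 1) := by
  obtain ⟨k, rfl⟩ := Nat.exists_eq_add_of_le' hl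
  have absorption : ((n + 1) * n.choose k : K) = (n + 1).choose (k + 1) * (k + 1) := by
    exact_mod_cast Nat.add_one_mul_choose_eq n k
  rw [Nat.add_sub_cancel, Nat.cast_add_one,
    div_eq_div_iff (Nat.cast_add_one_ne_zero k) (Nat.cast_add_one_ne_zero n)]
  linear_combination absorption

theorem sum_Icc_choose_mul_pow_div_succ (n : ℕ) (x : K) :
    ∑ l ∈ Icc 1 (n + 1), ((n + 1).choose l : K) * x ^ l / l
      = ∑ l ∈ Icc 1 n, (n.choose l : K) * x ^ l / l + ((1 + x) ^ (n + 1) - 1) / (n + 1) := by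
  have pascal : ∀ l ∈ Icc 1 (n + 1), ((n + 1).choose l : K) * x ^ l / l
      = (n.choose l : K) * x ^ l / l + ((n + 1).choose l : K) * x ^ l / (n + 1) := by
    intro l hmem
    have hl : 0 < l := (mem_Icc.mp hmem).1
    rw [mul_div_right_comm _ _ ((n : K) + 1), ← cast_choose_pred_div n hl, Nat.choose_succ_left n l hl]
    push_cast
    ring
  rw [sum_congr rfl pascal, sum_add_distrib, ← sum_div, ← Nat.cast_add_one,
    sum_Icc_one_choose_mul_pow, sum_Icc_succ_top (by omega), Nat.choose_succ_self]
  simp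

end CharZeroField

/-- For every natural number `n` and real `x`,
`∑_{l=1}^n C(n,l) x^l / l = ∑_{l=1}^n ((1+x)^l - 1)/l`. -/
theorem sum_choose_pow_div_eq (n : ℕ) (x : ℝ) :
    ∑ l ∈ Finset.Icc 1 n, (n.choose l : ℝ) * x ^ l / l
      = ∑ l ∈ Finset.Icc 1 n, ((1 + x) ^ l - 1) / l := by
  induction n with
  | zero => simp
  | succ n ih =>
    rw [sum_Icc_choose_mul_pow_div_succ, ih, sum_Icc_succ_top (by omega), Nat.cast_add_one]
end

section
/- For every natural number n ≥ 1 and every real number d, ∑_{l=1}^{n} ((−1)^l · d/(2(l+1))) · C(n+1, l+1) · (n+2 − d^l) + n(n+1)d/2 = ∑_{l=2}^{n+1} (1/(2l)) · (d(n+2) − 1 + (1−d)^l). (This is the computation showing that if G/P is embedded as a degree-d hypersurface in P^{n+1} via L_λ, the height h(G/P, O(1)) equals the right-hand side.) -/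
/-!
Put `A(x) = ∑_{k=1}^{n+1} (-1)^{k-1} C(n+1,k) x^k / k`. Both `A(x)` and `∑_{k=1}^{n+1} (1 - (1-x)^k) / k`
are `∫₀ˣ (1 - (1-t)^{n+1}) / t dt`; this is proved by induction on `n + 1` through Pascal's rule.
Adding the `l = 0` term to the left-hand sum and the `l = 1` term to the right-hand sum (they differ by
exactly `n(n+1)d/2`), both sides become `((n+2) d A(1) - A(d)) / 2`.
-/

open Finset

theorem Finset.sum_range_succ_add_eq_add_sum_Icc {M : Type*} [AddCommMonoid M] (f : ℕ → M)
    (a n : ℕ) : ∑ j ∈ range (n + 1), f (j + a) = f a + ∑ l ∈ Icc (a + 1) (n + a), f l := by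
  rw [range_eq_Ico, sum_Ico_add', sum_eq_sum_Ico_succ_bot (by omega), zero_add,
    show n + 1 + a = n + a + 1 by omega, Ico_add_one_right_eq_Icc]

section Alternating

variable {K : Type*}

theorem sum_range_neg_one_pow_mul_choose_succ_mul_pow [CommRing K] (N : ℕ) (x : K) :
    ∑ j ∈ range N, (-1) ^ j * (N.choose (j + 1) : K) * x ^ (j + 1) = 1 - (1 - x) ^ N := by
  have h := add_pow (-x) 1 N
  rw [sum_range_succ'] at h
  simp only [one_pow, mul_one, pow_zero, Nat.choose_zero_right, Nat.cast_one] at h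
  rw [show 1 - x = -x + 1 by ring, h, sub_add_cancel_right, ← sum_neg_distrib]
  refine sum_congr rfl fun j _ => ?_
  rw [neg_pow x, pow_succ (-1 : K)]
  ring

variable [Field K] [CharZero K]

/-- Both sides equal `∫₀ˣ (1 - t)ᴺ dt`. -/
theorem sum_range_neg_one_pow_mul_choose_mul_pow_succ_div (N : ℕ) (x : K) :
    ∑ j ∈ range (N + 1), (-1) ^ j * (N.choose j : K) * x ^ (j + 1) / (j + 1)
      = (1 - (1 - x) ^ (N + 1)) / (N + 1) := by
  rw [← sum_range_neg_one_pow_mul_choose_succ_mul_pow, sum_div]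
  refine sum_congr rfl fun j _ => ?_
  have h : ((N : K) + 1) * N.choose j = (N + 1).choose (j + 1) * ((j : K) + 1) := by
    exact_mod_cast Nat.add_one_mul_choose_eq N j
  rw [div_eq_div_iff (Nat.cast_add_one_ne_zero j) (Nat.cast_add_one_ne_zero N)]
  linear_combination (-1) ^ j * x ^ (j + 1) * h

theorem sum_range_neg_one_pow_mul_choose_succ_mul_pow_div (N : ℕ) (x : K) :
    ∑ j ∈ range N, (-1) ^ j * (N.choose (j + 1) : K) * x ^ (j + 1) / (j + 1)
      = ∑ l ∈ range N, (1 - (1 - x) ^ (l + 1)) / (l + 1) := by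
  induction N with
  | zero => simp
  | succ N ih =>
    have pascal : ∀ j ∈ range (N + 1),
        (-1) ^ j * ((N + 1).choose (j + 1) : K) * x ^ (j + 1) / (j + 1)
          = (-1) ^ j * (N.choose (j + 1) : K) * x ^ (j + 1) / (j + 1)
            + (-1) ^ j * (N.choose j : K) * x ^ (j + 1) / (j + 1) := by
      intro j _
      rw [Nat.choose_succ_succ', Nat.cast_add]
      ring
    rw [sum_congr rfl pascal, sum_add_distrib, sum_range_succ _ N, Nat.choose_succ_self,
      Nat.cast_zero, mul_zero, zero_mul, zero_div, add_zero, ih,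
      sum_range_neg_one_pow_mul_choose_mul_pow_succ_div, sum_range_succ _ N]

end Alternating

theorem hypersurface_height_identity_general (n : ℕ) (d : ℝ) :
    (∑ l ∈ Finset.Icc 1 n,
        ((-1 : ℝ) ^ l * d / (2 * (l + 1))) * ((n + 1).choose (l + 1)) * (n + 2 - d ^ l))
      + n * (n + 1) * d / 2
      = ∑ l ∈ Finset.Icc 2 (n + 1), (1 / (2 * l)) * (d * (n + 2) - 1 + (1 - d) ^ l) := by
  set T : ℕ → ℝ := fun l ↦
    ((-1 : ℝ) ^ l * d / (2 * (l + 1))) * ((n + 1).choose (l + 1)) * (n + 2 - d ^ l)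
  set g : ℕ → ℝ := fun l ↦ (1 / (2 * l)) * (d * (n + 2) - 1 + (1 - d) ^ l)
  have hT := sum_range_succ_add_eq_add_sum_Icc T 0 n
  have hg := sum_range_succ_add_eq_add_sum_Icc g 1 n
  simp only [add_zero, zero_add] at hT
  simp only [Nat.reduceAdd] at hg
  have key := sum_range_neg_one_pow_mul_choose_succ_mul_pow_div (K := ℝ) (n + 1)
  have hsum : ∑ j ∈ range (n + 1), T j = ∑ j ∈ range (n + 1), g (j + 1) := calc
    _ = ((n + 2) * d
            * ∑ j ∈ range (n + 1), (-1) ^ j * ((n + 1).choose (j + 1) : ℝ) * 1 ^ (j + 1) / (j + 1)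
          - ∑ j ∈ range (n + 1), (-1) ^ j * ((n + 1).choose (j + 1) : ℝ) * d ^ (j + 1) / (j + 1))
          / 2 := by
      rw [mul_sum, ← sum_sub_distrib, sum_div]
      refine sum_congr rfl fun j _ => ?_
      simp only [T]
      field_simp
      ring
    _ = ((n + 2) * d * ∑ j ∈ range (n + 1), (1 - (1 - 1) ^ (j + 1)) / ((j : ℝ) + 1)
          - ∑ j ∈ range (n + 1), (1 - (1 - d) ^ (j + 1)) / ((j : ℝ) + 1)) / 2 := by
      rw [key, key]
    _ = _ := by
      rw [mul_sum, ← sum_sub_distrib, sum_div]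
      refine sum_congr rfl fun j _ => ?_
      simp only [g]
      push_cast
      field_simp
      ring
  have hT0 : T 0 = (n + 1) ^ 2 * d / 2 := by
    simp only [T, pow_zero, one_mul, Nat.cast_zero, zero_add, mul_one, Nat.choose_one_right,
      Nat.cast_add, Nat.cast_one]
    ring
  have hg1 : g 1 = (n + 1) * d / 2 := by
    simp only [g, Nat.cast_one, pow_one]
    ring
  linear_combination hsum - hT + hg - hT0 + hg1

/-- For `n ≥ 1` and real `d`,
`∑_{l=1}^n ((-1)^l d / (2(l+1))) C(n+1,l+1) (n+2 - d^l) + n(n+1)d/2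
  = ∑_{l=2}^{n+1} (1/(2l)) (d(n+2) - 1 + (1-d)^l)`. -/
theorem hypersurface_height_identity (n : ℕ) (hn : 1 ≤ n) (d : ℝ) :
    (∑ l ∈ Finset.Icc 1 n,
        ((-1 : ℝ) ^ l * d / (2 * (l + 1))) * ((n + 1).choose (l + 1)) * (n + 2 - d ^ l))
      + n * (n + 1) * d / 2
      = ∑ l ∈ Finset.Icc 2 (n + 1), (1 / (2 * l)) * (d * (n + 2) - 1 + (1 - d) ^ l) :=
  hypersurface_height_identity_general n d
end

section
/- For every natural number m ≥ 1, ∑_{l=2}^{2m+1} (4m + 3 + (−1)^l)/(2l) = (2m+1)·∑_{k=1}^{2m−1} 1/k + (1/2)·∑_{k=1}^{m−1} 1/k − 2m + 1 + 1/m. (This recovers the Cassaigne–Maillot formula for the height of the even-dimensional smooth quadric Q_{2m} from the general hypersurface height identity with degree d = 2 and dimension n = 2m.) -/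
/-!
Splitting the summand as `(4m+3)/(2l) + (-1)^l/(2l)` and using the alternating harmonic sum
`∑_{k ≤ 2n+1} (-1)^k/k = H_n - H_{2n+1}`, the left side equals `(2m+1)(H_{2m+1} - 1) + H_m/2`
for every `m`. For `m ≥ 1`, peeling the last terms off `H_{2m+1}` and `H_m` turns this into the
right side.
-/

open Finset

lemma sum_Icc_one_div_eq_harmonic (n : ℕ) : ∑ k ∈ Icc 1 n, (1 : ℚ) / k = harmonic n := by
  simp only [one_div, harmonic_eq_sum_Icc]

lemma sum_Icc_neg_one_pow_div_eq_harmonic_sub (n : ℕ) :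
    ∑ k ∈ Icc 1 (2 * n + 1), (-1 : ℚ) ^ k / k = harmonic n - harmonic (2 * n + 1) := by
  induction n with
  | zero => norm_num
  | succ n ih =>
    have heven : (-1 : ℚ) ^ (2 * n + 1 + 1) = 1 := Even.neg_one_pow ⟨n + 1, by ring⟩
    have hodd : (-1 : ℚ) ^ (2 * n + 1 + 1 + 1) = -1 := Odd.neg_one_pow ⟨n + 1, by ring⟩
    rw [show 2 * (n + 1) + 1 = 2 * n + 1 + 1 + 1 by ring, sum_Icc_succ_top (by omega),
      sum_Icc_succ_top (by omega), ih, heven, hodd, harmonic_succ (2 * n + 1 + 1),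
      harmonic_succ (2 * n + 1), harmonic_succ n]
    push_cast
    field_simp
    ring

lemma quadric_sum_eq_harmonic (m : ℕ) :
    ∑ l ∈ Icc 2 (2 * m + 1), (4 * m + 3 + (-1 : ℚ) ^ l) / (2 * l)
      = (2 * m + 1) * (harmonic (2 * m + 1) - 1) + harmonic m / 2 := by
  have hsplit : ∀ l : ℕ, (4 * m + 3 + (-1 : ℚ) ^ l) / (2 * l)
      = (4 * m + 3) / 2 * (1 / l) + 1 / 2 * ((-1) ^ l / l) := fun l => by ring
  have htotal : ∑ l ∈ Icc 1 (2 * m + 1), (4 * m + 3 + (-1 : ℚ) ^ l) / (2 * l)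
      = (4 * m + 3) / 2 * harmonic (2 * m + 1) + 1 / 2 * (harmonic m - harmonic (2 * m + 1)) := by
    simp only [hsplit, sum_add_distrib, ← mul_sum, sum_Icc_one_div_eq_harmonic,
      sum_Icc_neg_one_pow_div_eq_harmonic_sub]
  rw [← add_sum_Ioc_eq_sum_Icc (by omega), ← Icc_add_one_left_eq_Ioc] at htotal
  simp only [Nat.reduceAdd] at htotal
  linear_combination htotal

/-- Cassaigne–Maillot formula for the height of the even-dimensional quadric `Q_{2m}`:
for `m ≥ 1`,
`∑_{l=2}^{2m+1} (4m+3+(-1)^l)/(2l)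
  = (2m+1) ∑_{k=1}^{2m-1} 1/k + (1/2) ∑_{k=1}^{m-1} 1/k - 2m + 1 + 1/m`. -/
theorem even_quadric_height (m : ℕ) (hm : 1 ≤ m) :
    ∑ l ∈ Finset.Icc 2 (2 * m + 1), (4 * m + 3 + (-1 : ℚ) ^ l) / (2 * l)
      = (2 * m + 1) * (∑ k ∈ Finset.Icc 1 (2 * m - 1), (1 : ℚ) / k)
        + (1 / 2) * (∑ k ∈ Finset.Icc 1 (m - 1), (1 : ℚ) / k)
        - 2 * m + 1 + 1 / m := by
  obtain ⟨n, rfl⟩ : ∃ n, m = n + 1 := ⟨m - 1, by omega⟩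
  rw [quadric_sum_eq_harmonic, sum_Icc_one_div_eq_harmonic, sum_Icc_one_div_eq_harmonic,
    show 2 * (n + 1) - 1 = 2 * n + 1 by omega, Nat.add_sub_cancel,
    show 2 * (n + 1) + 1 = 2 * n + 1 + 1 + 1 by ring, harmonic_succ (2 * n + 1 + 1),
    harmonic_succ (2 * n + 1), harmonic_succ n]
  push_cast
  field_simp
  ring
end

section
/- Let Q(X,Y) be a polynomial in two variables with real coefficients of total degree at most n, and let j be a positive integer. Then there exists a constant C > 0 such that for every integer m ≥ 2, | ∑_{k=1}^{jm} Q(m,k)·log k − ∫_{1}^{jm} Q(m,t)·log t \, dt | ≤ C · m^n · log m. (This is the sum-versus-integral approximation, with the required uniformity in m, used in the asymptotic computation of the covolume term r(m) in the proof of the height formula for generalized flag varieties.) -/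
/-!
Expanding `Q(m, t) = ∑ c_d m^{d₀} t^{d₁}`, the defect (sum minus integral) is a linear combination
of the defects of the functions `t^l log t`. These are monotone on `[1, ∞)` and vanish at `1`, so
squeezing the integral between the lower and upper Riemann sums bounds each such defect by
`N^l log N`, where `N = jm`. Finally `m^{d₀} N^{d₁} ≤ N^n = j^n m^n` and `log (jm) ≤ (j + 1) log m`.
-/

open Finset in
theorem MonotoneOn.abs_sum_Icc_sub_integral_le {f : ℝ → ℝ} {a b : ℕ} (hab : a ≤ b)
    (hf : MonotoneOn f (Set.Icc a b)) (ha : 0 ≤ f a) :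
    |∑ k ∈ Icc a b, f k - ∫ x in a..b, f x| ≤ f b := by
  have lower : ∑ k ∈ Ico a b, f k ≤ ∫ x in a..b, f x := hf.sum_le_integral_Ico hab
  have upper : ∫ x in a..b, f x ≤ ∑ k ∈ Ioc a b, f k := by
    simpa only [sum_Ico_add' (fun k : ℕ => f k), Finset.Ico_add_one_add_one_eq_Ioc]
      using hf.integral_le_sum_Ico hab
  have hIcc_top : ∑ k ∈ Icc a b, f k = ∑ k ∈ Ico a b, f k + f b := by
    rw [← Ico_add_one_right_eq_Icc, sum_Ico_succ_top hab]
  have hIcc_bot : ∑ k ∈ Icc a b, f k = f a + ∑ k ∈ Ioc a b, f k :=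
    (add_sum_Ioc_eq_sum_Icc hab).symm
  rw [abs_le]
  constructor <;> linarith

theorem monotoneOn_pow_mul_log (l : ℕ) :
    MonotoneOn (fun x : ℝ => x ^ l * Real.log x) (Set.Ici 1) := by
  intro x (hx : 1 ≤ x) y _ hxy
  exact mul_le_mul (pow_le_pow_left₀ (by linarith) hxy l) (Real.log_le_log (by linarith) hxy)
    (Real.log_nonneg hx) (pow_nonneg (by linarith) l)

theorem abs_sum_Icc_pow_mul_log_sub_integral_le (l : ℕ) {N : ℕ} (hN : 1 ≤ N) :
    |∑ k ∈ Finset.Icc 1 N, (k : ℝ) ^ l * Real.log k - ∫ t in (1 : ℝ)..N, t ^ l * Real.log t|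
      ≤ (N : ℝ) ^ l * Real.log N := by
  have hmono : MonotoneOn (fun x : ℝ => x ^ l * Real.log x) (Set.Icc ((1 : ℕ) : ℝ) N) :=
    (monotoneOn_pow_mul_log l).mono fun x hx => by simpa using hx.1
  simpa using hmono.abs_sum_Icc_sub_integral_le hN (by simp)

theorem MvPolynomial.eval_fin_two (Q : MvPolynomial (Fin 2) ℝ) (x y : ℝ) :
    eval ![x, y] Q = ∑ d ∈ Q.support, Q.coeff d * (x ^ d 0 * y ^ d 1) := by
  simp [eval_eq', Fin.prod_univ_two]

theorem intervalIntegrable_pow_mul_log (l : ℕ) (a b : ℝ) :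
    IntervalIntegrable (fun t => t ^ l * Real.log t) MeasureTheory.volume a b :=
  intervalIntegral.intervalIntegrable_log'.continuousOn_mul (continuous_pow l).continuousOn

theorem sum_Icc_eval_mul_log_sub_integral (Q : MvPolynomial (Fin 2) ℝ) (x : ℝ) (N : ℕ) :
    ∑ k ∈ Finset.Icc 1 N, MvPolynomial.eval ![x, (k : ℝ)] Q * Real.log k
        - ∫ t in (1 : ℝ)..N, MvPolynomial.eval ![x, t] Q * Real.log t
      = ∑ d ∈ Q.support, Q.coeff d * x ^ d 0 *
          (∑ k ∈ Finset.Icc 1 N, (k : ℝ) ^ d 1 * Real.log k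
            - ∫ t in (1 : ℝ)..N, t ^ d 1 * Real.log t) := by
  have hterm : ∀ y : ℝ, MvPolynomial.eval ![x, y] Q * Real.log y
      = ∑ d ∈ Q.support, Q.coeff d * x ^ d 0 * (y ^ d 1 * Real.log y) := by
    intro y
    rw [MvPolynomial.eval_fin_two, Finset.sum_mul]
    exact Finset.sum_congr rfl fun d _ => by ring
  simp_rw [hterm, mul_sub, Finset.sum_sub_distrib, Finset.mul_sum]
  rw [Finset.sum_comm, intervalIntegral.integral_finsetSum
    fun d _ => (intervalIntegrable_pow_mul_log _ _ _).const_mul _]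
  simp_rw [intervalIntegral.integral_const_mul]

theorem abs_sum_Icc_eval_mul_log_sub_integral_le {n : ℕ} {Q : MvPolynomial (Fin 2) ℝ}
    (hQ : Q.totalDegree ≤ n) {x : ℝ} (hx : 1 ≤ x) {N : ℕ} (hxN : x ≤ N) :
    |∑ k ∈ Finset.Icc 1 N, MvPolynomial.eval ![x, (k : ℝ)] Q * Real.log k
        - ∫ t in (1 : ℝ)..N, MvPolynomial.eval ![x, t] Q * Real.log t|
      ≤ (∑ d ∈ Q.support, |Q.coeff d|) * (N : ℝ) ^ n * Real.log N := by
  have hN : 1 ≤ N := by exact_mod_cast hx.trans hxN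
  have hN' : (1 : ℝ) ≤ N := hx.trans hxN
  rw [sum_Icc_eval_mul_log_sub_integral, Finset.sum_mul, Finset.sum_mul]
  refine (Finset.abs_sum_le_sum_abs _ _).trans (Finset.sum_le_sum fun d hd => ?_)
  have hdeg : d 0 + d 1 ≤ n := by
    simpa [Finsupp.sum_fintype, Fin.sum_univ_two] using
      (MvPolynomial.le_totalDegree hd).trans hQ
  rw [abs_mul, abs_mul, abs_pow, abs_of_nonneg (by linarith : 0 ≤ x), mul_assoc, mul_assoc]
  gcongr |Q.coeff d| * ?_
  calc x ^ d 0 * |∑ k ∈ Finset.Icc 1 N, (k : ℝ) ^ d 1 * Real.log k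
          - ∫ t in (1 : ℝ)..N, t ^ d 1 * Real.log t|
      ≤ (N : ℝ) ^ d 0 * ((N : ℝ) ^ d 1 * Real.log N) := by
        gcongr
        exact abs_sum_Icc_pow_mul_log_sub_integral_le (d 1) hN
    _ = (N : ℝ) ^ (d 0 + d 1) * Real.log N := by ring
    _ ≤ (N : ℝ) ^ n * Real.log N := by gcongr

theorem Real.log_natCast_mul_le_add_one_mul_log (j : ℕ) {m : ℕ} (hm : 2 ≤ m) :
    Real.log (j * m) ≤ (j + 1) * Real.log m := by
  rcases j.eq_zero_or_pos with rfl | hj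
  · simp [Real.log_nonneg (by exact_mod_cast (by omega : 1 ≤ m) : (1 : ℝ) ≤ m)]
  have hle : j * m ≤ m ^ (j + 1) := by
    rw [pow_succ]
    exact Nat.mul_le_mul_right m (Nat.lt_two_pow_self.le.trans (Nat.pow_le_pow_left hm j))
  calc Real.log (j * m) ≤ Real.log (m ^ (j + 1) : ℕ) :=
        Real.log_le_log (by positivity) (by exact_mod_cast hle)
    _ = (j + 1) * Real.log m := by rw [Nat.cast_pow, Real.log_pow]; push_cast; ring

/-- Sum-versus-integral approximation of `∑_{k=1}^{jm} Q(m,k) log k`, uniformly in `m`: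
if `Q` is a real polynomial in two variables of total degree at most `n` and `j ≥ 1`,
then there is `C > 0` such that for all integers `m ≥ 2`,
`|∑_{k=1}^{jm} Q(m,k) log k − ∫_1^{jm} Q(m,t) log t dt| ≤ C m^n log m`. -/
theorem sum_sub_integral_log_estimate
    (n : ℕ) (Q : MvPolynomial (Fin 2) ℝ) (hQ : Q.totalDegree ≤ n)
    (j : ℕ) (hj : 1 ≤ j) :
    ∃ C : ℝ, 0 < C ∧ ∀ m : ℕ, 2 ≤ m →
      |(∑ k ∈ Finset.Icc 1 (j * m),
            MvPolynomial.eval ![(m : ℝ), (k : ℝ)] Q * Real.log k)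
          - ∫ t in (1 : ℝ)..(j * m : ℕ),
              MvPolynomial.eval ![(m : ℝ), t] Q * Real.log t|
        ≤ C * (m : ℝ) ^ n * Real.log m := by
  set c := ∑ d ∈ Q.support, |Q.coeff d|
  refine ⟨c * j ^ n * (j + 1) + 1, by positivity, fun m hm => ?_⟩
  have hm1 : (1 : ℝ) ≤ m := by exact_mod_cast (by omega : 1 ≤ m)
  have hmN : (m : ℝ) ≤ (j * m : ℕ) := by
    push_cast; exact le_mul_of_one_le_left (by positivity) (by exact_mod_cast hj)
  calc _ ≤ c * ((j * m : ℕ) : ℝ) ^ n * Real.log (j * m : ℕ) :=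
        abs_sum_Icc_eval_mul_log_sub_integral_le hQ hm1 hmN
    _ ≤ c * ((j : ℝ) ^ n * (m : ℝ) ^ n) * ((j + 1) * Real.log m) := by
        rw [Nat.cast_mul, mul_pow]
        gcongr
        exact Real.log_natCast_mul_le_add_one_mul_log j hm
    _ = c * j ^ n * (j + 1) * (m : ℝ) ^ n * Real.log m := by ring
    _ ≤ (c * j ^ n * (j + 1) + 1) * (m : ℝ) ^ n * Real.log m := by gcongr; linarith
end
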